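/- arXiv:2108.05310 — 4 statements merged into one kernel-verified Lean document; each statement's English description precedes it below -/
import Mathlib

section
/- Let I ⊆ ℝ be open, let Π : I → ℝ^m be n-times continuously differentiable, and let S be a constant m×m real matrix. Suppose that Π(t)ᵀ S Π^{(j)}(t) = 0 for all t ∈ I and all 0 ≤ j ≤ n−1. Then for every 0 ≤ k ≤ n and all t ∈ I: Π^{(k)}(t)ᵀ S Π^{(n−k)}(t) = (−1)^k · Π(t)ᵀ S Π^{(n)}(t). -/
/-!
Write `F j k = Π⁽ʲ⁾ᵀ S Π⁽ᵏ⁾`, so that `(F j k)' = F (j+1) k + F j (k+1)` by the Leibniz rule.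
By induction on `k`, `F k j = (-1)^k F 0 (k+j)`; when `k + j < n` this vanishes identically on `I`,
and differentiating it there gives `F (k+1) j = -F k (j+1)`, which is the induction step.
-/

open Matrix

theorem ContDiffOn.hasDerivAt_iteratedDeriv {𝕜 F : Type*} [NontriviallyNormedField 𝕜]
    [NormedAddCommGroup F] [NormedSpace 𝕜 F] {f : 𝕜 → F} {s : Set 𝕜} {n : WithTop ℕ∞} {k : ℕ}
    (hf : ContDiffOn 𝕜 n f s) (hs : IsOpen s) (hk : k < n) {x : 𝕜} (hx : x ∈ s) :
    HasDerivAt (iteratedDeriv k f) (iteratedDeriv (k + 1) f x) x := by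
  have hdiff : DifferentiableOn 𝕜 (iteratedDeriv k f) s :=
    (hf.differentiableOn_iteratedDerivWithin hk hs.uniqueDiffOn).congr
      (iteratedDerivWithin_of_isOpen hs).symm
  rw [iteratedDeriv_succ]
  exact (hdiff.differentiableAt (hs.mem_nhds hx)).hasDerivAt

section Bilinear

variable {E G : Type*} [NormedAddCommGroup E] [NormedSpace ℝ E] [NormedAddCommGroup G]
  [NormedSpace ℝ G] (B : E →L[ℝ] E →L[ℝ] G) {I : Set ℝ} {n : ℕ} {D : ℕ → ℝ → E}

theorem bilinear_succ_left_eq_neg_succ_right (hI : IsOpen I)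
    (hD : ∀ j < n, ∀ t ∈ I, HasDerivAt (D j) (D (j + 1) t) t) {k j : ℕ} (hk : k < n) (hj : j < n)
    (hzero : ∀ t ∈ I, B (D k t) (D j t) = 0) {t : ℝ} (ht : t ∈ I) :
    B (D (k + 1) t) (D j t) = -B (D k t) (D (j + 1) t) := by
  have hleibniz := B.hasDerivAt_of_bilinear (fun _ ↦ hD k hk t ht) (fun _ ↦ hD j hj t ht)
  have hconst : HasDerivAt (fun s ↦ B (D k s) (D j s)) 0 t :=
    (hasDerivAt_const t (0 : G)).congr_of_eventuallyEq
      (Filter.eventuallyEq_of_mem (hI.mem_nhds ht) hzero)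
  rw [eq_neg_iff_add_eq_zero, add_comm]
  exact hleibniz.unique hconst

theorem bilinear_eq_neg_one_pow_smul (hI : IsOpen I)
    (hD : ∀ j < n, ∀ t ∈ I, HasDerivAt (D j) (D (j + 1) t) t)
    (hvanish : ∀ j < n, ∀ t ∈ I, B (D 0 t) (D j t) = 0) :
    ∀ k j, k + j ≤ n → ∀ t ∈ I, B (D k t) (D j t) = (-1 : ℝ) ^ k • B (D 0 t) (D (k + j) t) := by
  intro k
  induction k with
  | zero => simp
  | succ k ih =>
    intro j hkj t ht
    have hzero : ∀ s ∈ I, B (D k s) (D j s) = 0 := fun s hs ↦ by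
      rw [ih j (by omega) s hs, hvanish (k + j) (by omega) s hs, smul_zero]
    rw [bilinear_succ_left_eq_neg_succ_right B hI hD (by omega) (by omega) hzero ht,
      ih (j + 1) (by omega) t ht, pow_succ, mul_neg_one, neg_smul,
      show k + 1 + j = k + (j + 1) by omega]

end Bilinear

/-- Griffiths-transversality consequence: if the `n`-times continuously differentiable
vector-valued function `Π : I → ℝ^m` pairs to zero (via the constant matrix `S`) with
all its derivatives of order `0 ≤ j ≤ n−1` on the open set `I`, then for every
`0 ≤ k ≤ n` and `t ∈ I`:
`Π^{(k)}(t)ᵀ S Π^{(n−k)}(t) = (−1)^k · Π(t)ᵀ S Π^{(n)}(t)`. -/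
theorem antidiagonal_pairings_eq
    (m n : ℕ) (I : Set ℝ) (hI : IsOpen I)
    (P : ℝ → Fin m → ℝ) (S : Matrix (Fin m) (Fin m) ℝ)
    (hsmooth : ∀ a, ContDiffOn ℝ n (fun t => P t a) I)
    (hvanish : ∀ t ∈ I, ∀ j < n,
      dotProduct (P t) (S.mulVec fun b => iteratedDeriv j (fun s => P s b) t) = 0) :
    ∀ k ≤ n, ∀ t ∈ I,
      dotProduct (fun a => iteratedDeriv k (fun s => P s a) t)
          (S.mulVec fun b => iteratedDeriv (n - k) (fun s => P s b) t)
        = (-1 : ℝ) ^ k *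
            dotProduct (P t) (S.mulVec fun b => iteratedDeriv n (fun s => P s b) t) := by
  set D : ℕ → ℝ → Fin m → ℝ := fun j t a ↦ iteratedDeriv j (fun s ↦ P s a) t
  set B := LinearMap.toContinuousBilinearMap
    (Matrix.toLinearMap₂' ℝ S : (Fin m → ℝ) →ₗ[ℝ] (Fin m → ℝ) →ₗ[ℝ] ℝ)
  have hB : ∀ v w, B v w = v ⬝ᵥ S *ᵥ w := fun v w ↦ Matrix.toLinearMap₂'_apply' S v w
  have hD : ∀ j < n, ∀ t ∈ I, HasDerivAt (D j) (D (j + 1) t) t := fun j hj t ht ↦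
    hasDerivAt_pi.2 fun a ↦ (hsmooth a).hasDerivAt_iteratedDeriv hI (mod_cast hj) ht
  have hD0 : ∀ t, D 0 t = P t := fun t ↦ rfl
  intro k hk t ht
  have hpair := bilinear_eq_neg_one_pow_smul B hI hD
    (fun j hj t ht ↦ by rw [hB, hD0]; exact hvanish t ht j hj) k (n - k) (by omega) t ht
  rwa [hB, hB, hD0, Nat.add_sub_cancel' hk, smul_eq_mul] at hpair
end

section
/- Define a_n = Σ_{i+j+k=n, i,j,k ≥ 0} (n! / (i! j! k!))² for n ≥ 0 (so a₀ = 1, a₁ = 3, a₂ = 15). Then for every n ≥ 2 the Apéry-like recurrence n² a_n = (10n² − 10n + 3) a_{n−1} − 9(n−1)² a_{n−2} holds. -/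
/-!
Vandermonde's identity `∑ⱼ C(m,j)² = C(2m,m)` sums out one index and turns `a n` into the single
sum `∑ₖ F(n,k)` with `F(n,k) = C(n,k)² C(2k,k)`. Zeilberger's algorithm produces the certificate
`G(n,k) = k³ (3k − 4n − 8) F(n+2,k)`, for which
`(n+2)² ((n+2)² F(n+2,k) − (10(n+2)² − 10(n+2) + 3) F(n+1,k) + 9(n+1)² F(n,k)) = G(n,k+1) − G(n,k)`
follows from the hypergeometric term ratios of `F` in `n` and in `k`. Since `G(n,0) = G(n,n+3) = 0`,
summing over `k < n + 3` telescopes to the recurrence.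
-/

open scoped BigOperators

/-- `a n = ∑_{i+j+k=n} (n!/(i!j!k!))²`, the sum of squares of trinomial coefficients. -/
noncomputable def bananaApery (n : ℕ) : ℚ :=
  ∑ i ∈ Finset.range (n + 1), ∑ j ∈ Finset.range (n + 1 - i),
    ((n.factorial : ℚ) / ((i.factorial : ℚ) * (j.factorial : ℚ) * ((n - i - j).factorial : ℚ))) ^ 2

open Finset Nat

namespace Nat

variable {R : Type*} [CommRing R]

theorem cast_choose_mul_succ_eq (n k : ℕ) :
    (n.choose k : R) * (n + 1) = ((n + 1).choose k : R) * (n + 1 - k) := by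
  rcases le_or_gt k (n + 1) with hk | hk
  · have h := congrArg (Nat.cast : ℕ → R) (choose_mul_succ_eq n k)
    push_cast [hk] at h
    exact h
  · simp [choose_eq_zero_of_lt hk, choose_eq_zero_of_lt (show n < k by omega)]

theorem cast_choose_succ_right_eq (n k : ℕ) :
    (n.choose (k + 1) : R) * (k + 1) = (n.choose k : R) * (n - k) := by
  rcases le_or_gt k n with hk | hk
  · have h := congrArg (Nat.cast : ℕ → R) (choose_succ_right_eq n k)
    push_cast [hk] at h
    exact h
  · simp [choose_eq_zero_of_lt hk, choose_eq_zero_of_lt (show n < k + 1 by omega)]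

theorem cast_succ_mul_centralBinom_succ (k : ℕ) :
    ((k : R) + 1) * (k + 1).centralBinom = 2 * (2 * k + 1) * k.centralBinom := by
  have h := congrArg (Nat.cast : ℕ → R) (succ_mul_centralBinom_succ k)
  push_cast at h
  exact h

theorem cast_factorial_div_eq_choose_mul_choose {K : Type*} [Field K] [CharZero K] {n i j : ℕ}
    (hi : i ≤ n) (hj : j ≤ n - i) :
    (n ! : K) / (i ! * j ! * (n - i - j)!) = n.choose i * (n - i).choose j := by
  rw [cast_choose K hi, cast_choose K hj]
  field_simp
  exact (mul_div_mul_right _ _ (cast_ne_zero.2 (factorial_ne_zero _))).symm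

end Nat

theorem bananaApery_eq_sum_choose_sq_mul_centralBinom (n : ℕ) :
    bananaApery n = ∑ k ∈ range (n + 1), (n.choose k : ℚ) ^ 2 * k.centralBinom := by
  have inner : ∀ i ∈ range (n + 1),
      ∑ j ∈ range (n + 1 - i), ((n ! : ℚ) / (i ! * j ! * (n - i - j)!)) ^ 2
        = (n.choose (n - i) : ℚ) ^ 2 * (n - i).centralBinom := by
    intro i hi
    have hin : i ≤ n := mem_range_succ_iff.mp hi
    rw [choose_symm hin, show n + 1 - i = n - i + 1 by omega,
      centralBinom_eq_two_mul_choose, ← sum_range_choose_sq, cast_sum, mul_sum]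
    refine sum_congr rfl fun j hj => ?_
    rw [cast_factorial_div_eq_choose_mul_choose hin (mem_range_succ_iff.mp hj)]
    push_cast
    ring
  rw [bananaApery, sum_congr rfl inner, ← sum_range_reflect]
  refine sum_congr rfl fun k hk => ?_
  rw [show n + 1 - 1 - k = n - k by omega, Nat.sub_sub_self (mem_range_succ_iff.mp hk)]

noncomputable def bananaTerm (n k : ℕ) : ℚ := (n.choose k : ℚ) ^ 2 * k.centralBinom

noncomputable def bananaCertificate (n k : ℕ) : ℚ :=
  (k : ℚ) ^ 3 * (3 * k - 4 * n - 8) * bananaTerm (n + 2) k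

theorem bananaApery_eq_sum_bananaTerm {n N : ℕ} (h : n < N) :
    bananaApery n = ∑ k ∈ range N, bananaTerm n k := by
  rw [bananaApery_eq_sum_choose_sq_mul_centralBinom]
  refine sum_subset (range_subset_range.2 h) fun k _ hk => ?_
  rw [choose_eq_zero_of_lt (by simpa using hk), cast_zero, zero_pow two_ne_zero, zero_mul]

theorem bananaTerm_mul_succ_sq (m k : ℕ) :
    bananaTerm m k * (m + 1) ^ 2 = bananaTerm (m + 1) k * (m + 1 - k) ^ 2 := by
  unfold bananaTerm
  linear_combination ((m.choose k : ℚ) * (m + 1) + ((m + 1).choose k : ℚ) * (m + 1 - k))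
    * (k.centralBinom : ℚ) * cast_choose_mul_succ_eq (R := ℚ) m k

theorem succ_pow_three_mul_bananaTerm_succ (m k : ℕ) :
    ((k : ℚ) + 1) ^ 3 * bananaTerm m (k + 1) = 2 * (2 * k + 1) * (m - k) ^ 2 * bananaTerm m k := by
  unfold bananaTerm
  linear_combination
    ((m.choose (k + 1) : ℚ) * (k + 1) + (m.choose k : ℚ) * (m - k)) * ((k : ℚ) + 1)
        * (k + 1).centralBinom * cast_choose_succ_right_eq (R := ℚ) m k
      + (m.choose k : ℚ) ^ 2 * (m - k) ^ 2 * cast_succ_mul_centralBinom_succ (R := ℚ) k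

theorem bananaTerm_zeilberger (n k : ℕ) :
    ((n : ℚ) + 2) ^ 2 * (((n : ℚ) + 2) ^ 2 * bananaTerm (n + 2) k
        - (10 * ((n : ℚ) + 2) ^ 2 - 10 * ((n : ℚ) + 2) + 3) * bananaTerm (n + 1) k
        + 9 * ((n : ℚ) + 1) ^ 2 * bananaTerm n k)
      = bananaCertificate n (k + 1) - bananaCertificate n k := by
  have shift_n₁ := bananaTerm_mul_succ_sq (n + 1) k
  have shift_n₀ := bananaTerm_mul_succ_sq n k
  have shift_k := succ_pow_three_mul_bananaTerm_succ (n + 2) k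
  push_cast at shift_n₁ shift_k
  unfold bananaCertificate
  push_cast
  linear_combination (4 * (n : ℚ) + 5 - 3 * k) * shift_k + 9 * ((n : ℚ) + 2) ^ 2 * shift_n₀
    + (9 * ((n : ℚ) + 1 - k) ^ 2 - (10 * ((n : ℚ) + 2) ^ 2 - 10 * ((n : ℚ) + 2) + 3)) * shift_n₁

theorem sum_range_bananaTerm_recurrence (n : ℕ) :
    ∑ k ∈ range (n + 3), (((n : ℚ) + 2) ^ 2 * bananaTerm (n + 2) k
        - (10 * ((n : ℚ) + 2) ^ 2 - 10 * ((n : ℚ) + 2) + 3) * bananaTerm (n + 1) k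
        + 9 * ((n : ℚ) + 1) ^ 2 * bananaTerm n k) = 0 := by
  have hn : ((n : ℚ) + 2) ^ 2 ≠ 0 := by positivity
  rw [← mul_right_inj' hn, mul_sum, sum_congr rfl fun k _ => bananaTerm_zeilberger n k,
    sum_range_sub, mul_zero]
  simp [bananaCertificate, bananaTerm]

/-- The sums of squares of trinomial coefficients `a_n = ∑_{i+j+k=n}(n!/(i!j!k!))²` satisfy
`a₀ = 1`, `a₁ = 3`, `a₂ = 15`, and for every `n ≥ 2` the Apéry-like recurrence
`n² a_n = (10n² − 10n + 3) a_{n−1} − 9(n−1)² a_{n−2}`. -/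
theorem bananaApery_recurrence :
    bananaApery 0 = 1 ∧ bananaApery 1 = 3 ∧ bananaApery 2 = 15 ∧
    ∀ n : ℕ, ((n : ℚ) + 2) ^ 2 * bananaApery (n + 2)
      = (10 * ((n : ℚ) + 2) ^ 2 - 10 * ((n : ℚ) + 2) + 3) * bananaApery (n + 1)
        - 9 * ((n : ℚ) + 1) ^ 2 * bananaApery n := by
  refine ⟨by norm_num [bananaApery], by norm_num [bananaApery, sum_range_succ],
    by norm_num [bananaApery, sum_range_succ, factorial], fun n => ?_⟩
  have hsum := sum_range_bananaTerm_recurrence n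
  rw [sum_add_distrib, sum_sub_distrib, ← mul_sum, ← mul_sum, ← mul_sum,
    ← bananaApery_eq_sum_bananaTerm (by omega), ← bananaApery_eq_sum_bananaTerm (by omega),
    ← bananaApery_eq_sum_bananaTerm (by omega)] at hsum
  linear_combination hsum
end

section
/- Let r ≥ 1, let a, b be real numbers, let c₁, …, c_r be real numbers that are not nonpositive integers, and let z₁, …, z_r be complex numbers satisfying |z₁|^{1/2} + ⋯ + |z_r|^{1/2} < 1. Then the Lauricella F_C series Σ_{n ∈ ℕ₀^r} [(a)_{|n|} (b)_{|n|} / ∏_{i=1}^r (c_i)_{n_i}] · ∏_{i=1}^r z_i^{n_i}/n_i! converges absolutely, where |n| = n₁ + ⋯ + n_r. -/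
open Finset Filter Topology Polynomial
open scoped Nat

/-! The ratio test shows that `(x)ₙ / n!` and `n! / (c)ₙ` grow subexponentially, so for any
`ρ > 1` the summand is at most `C ρ^{6|n|} (|n|! / ∏ nᵢ!)² ∏ |zᵢ|^{nᵢ} = C (m(n) ∏ wᵢ^{nᵢ})²`,
where `m(n)` is the multinomial coefficient and `wᵢ = ρ³ |zᵢ|^{1/2}`. Taking `ρ` close to 1
makes `∑ wᵢ < 1`; then `m(n) ∏ wᵢ^{nᵢ} ≤ (∑ wᵢ)^{|n|} ≤ 1`, and by the multinomial theorem
these terms sum over `|n| = N` to `(∑ wᵢ)^N`, a geometric series. -/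

theorem exists_abs_le_mul_pow_of_tendsto_ratio {u : ℕ → ℝ} (hu : ∀ n, u n ≠ 0) {l ρ : ℝ}
    (h : Tendsto (fun n => u (n + 1) / u n) atTop (𝓝 l)) (hρ : |l| < ρ) :
    ∃ C ≥ 0, ∀ n, |u n| ≤ C * ρ ^ n := by
  have hρ0 : 0 < ρ := (abs_nonneg l).trans_lt hρ
  set v : ℕ → ℝ := fun n => |u n| / ρ ^ n
  have hv : Summable v := by
    refine summable_of_ratio_test_tendsto_lt_one ((div_lt_one hρ0).2 hρ)
      (.of_forall fun n => div_ne_zero (abs_ne_zero.2 (hu n)) (pow_ne_zero _ hρ0.ne')) ?_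
    refine (h.abs.div_const ρ).congr fun n => ?_
    simp only [v, Real.norm_eq_abs, abs_div, abs_abs, abs_mul, abs_pow, abs_of_pos hρ0, pow_succ]
    field_simp
  refine ⟨∑' n, v n, tsum_nonneg fun n => by positivity, fun n => ?_⟩
  have := hv.le_tsum n fun _ _ => by positivity
  rwa [div_le_iff₀ (by positivity)] at this

theorem abs_ascPochhammer_eval_le (x : ℝ) (n : ℕ) :
    |(ascPochhammer ℝ n).eval x| ≤ (ascPochhammer ℝ n).eval (|x| + 1) := by
  induction n with
  | zero => simp
  | succ n ih =>
    rw [ascPochhammer_succ_eval, ascPochhammer_succ_eval, abs_mul]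
    refine mul_le_mul ih ?_ (abs_nonneg _) (ascPochhammer_pos _ _ (by positivity)).le
    calc |x + n| ≤ |x| + n := by simpa using abs_add_le x n
      _ ≤ |x| + 1 + n := by linarith

theorem exists_abs_ascPochhammer_eval_div_factorial_le (x : ℝ) {ρ : ℝ} (hρ : 1 < ρ) :
    ∃ C ≥ 0, ∀ n, |(ascPochhammer ℝ n).eval x| / n ! ≤ C * ρ ^ n := by
  have hp : 0 < |x| + 1 := by positivity
  have hratio : Tendsto (fun n => (ascPochhammer ℝ (n + 1)).eval (|x| + 1) / (n + 1)! /
      ((ascPochhammer ℝ n).eval (|x| + 1) / n !)) atTop (𝓝 1) := by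
    have hlim := tendsto_add_mul_div_add_mul_atTop_nhds (|x| + 1) 1 1 one_ne_zero
    rw [div_one] at hlim
    refine hlim.congr fun n => ?_
    have := (ascPochhammer_pos n _ hp).ne'
    rw [ascPochhammer_succ_eval, Nat.factorial_succ, Nat.cast_mul, Nat.cast_succ]
    field_simp
    ring
  obtain ⟨C, hC0, hC⟩ := exists_abs_le_mul_pow_of_tendsto_ratio
    (fun n => (div_pos (ascPochhammer_pos n _ hp) (Nat.cast_pos.2 n.factorial_pos)).ne') hratio
    (by rwa [abs_one])
  refine ⟨C, hC0, fun n => le_trans ?_ (hC n)⟩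
  rw [abs_div, Nat.abs_cast]
  exact div_le_div_of_nonneg_right
    ((abs_ascPochhammer_eval_le x n).trans (le_abs_self _)) (by positivity)

theorem exists_factorial_div_abs_ascPochhammer_eval_le {c : ℝ} (hc : ∀ k : ℕ, c ≠ -k)
    {ρ : ℝ} (hρ : 1 < ρ) :
    ∃ C ≥ 0, ∀ n, n ! / |(ascPochhammer ℝ n).eval c| ≤ C * ρ ^ n := by
  have hne : ∀ n, (ascPochhammer ℝ n).eval c ≠ 0 := fun n => by
    rw [ne_eq, ascPochhammer_eval_eq_zero_iff]
    rintro ⟨k, -, hk⟩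
    exact hc k (by linarith)
  have hratio : Tendsto (fun n => ((n + 1)! / (ascPochhammer ℝ (n + 1)).eval c) /
      (n ! / (ascPochhammer ℝ n).eval c)) atTop (𝓝 1) := by
    have hlim := tendsto_add_mul_div_add_mul_atTop_nhds 1 c 1 one_ne_zero
    rw [div_one] at hlim
    refine hlim.congr fun n => ?_
    have h := hne (n + 1)
    rw [ascPochhammer_succ_eval] at h ⊢
    have := hne n
    have := right_ne_zero_of_mul h
    rw [Nat.factorial_succ, Nat.cast_mul, Nat.cast_succ]
    field_simp
    ring
  obtain ⟨C, hC0, hC⟩ := exists_abs_le_mul_pow_of_tendsto_ratio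
    (fun n => div_ne_zero (Nat.cast_ne_zero.2 n.factorial_ne_zero) (hne n)) hratio
    (by rwa [abs_one])
  exact ⟨C, hC0, fun n => by simpa [abs_div] using hC n⟩

section

variable {ι : Type*} [Fintype ι]

theorem multinomial_mul_prod_pow_le {w : ι → ℝ} (hw : ∀ i, 0 ≤ w i) (n : ι → ℕ) :
    (Nat.multinomial univ n : ℝ) * ∏ i, w i ^ n i ≤ (∑ i, w i) ^ ∑ i, n i := by
  classical
  rw [sum_pow_eq_sum_piAntidiag]
  exact single_le_sum (f := fun k => (Nat.multinomial univ k : ℝ) * ∏ i, w i ^ k i)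
    (fun k _ => mul_nonneg (Nat.cast_nonneg _) (prod_nonneg fun i _ => pow_nonneg (hw i) _))
    (by simp [mem_piAntidiag])

theorem summable_multinomial_mul_prod_pow {w : ι → ℝ} (hw : ∀ i, 0 ≤ w i) (hsum : ∑ i, w i < 1) :
    Summable fun n : ι → ℕ => (Nat.multinomial univ n : ℝ) * ∏ i, w i ^ n i := by
  classical
  set f : (ι → ℕ) → ℝ := fun n => (Nat.multinomial univ n : ℝ) * ∏ i, w i ^ n i
  have hfiber : ∀ n : ι → ℕ, ∃! N : ℕ, n ∈ (piAntidiag (univ : Finset ι) N : Set (ι → ℕ)) :=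
    fun n => .intro (∑ i, n i) (by simp) fun N hN => (mem_piAntidiag.1 hN).1.symm
  have hf : 0 ≤ f := fun n =>
    mul_nonneg (Nat.cast_nonneg _) (prod_nonneg fun i _ => pow_nonneg (hw i) _)
  refine (summable_partition hf hfiber).2 ⟨fun N => (piAntidiag univ N).summable f, ?_⟩
  refine (summable_geometric_of_lt_one (sum_nonneg fun i _ => hw i) hsum).congr fun N => ?_
  exact (sum_pow_eq_sum_piAntidiag _ _ _).trans (Finset.tsum_subtype _ f).symm

noncomputable def lauricellaFCTerm (a b : ℝ) (c : ι → ℝ) (z : ι → ℂ)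
    (n : ι → ℕ) : ℂ :=
  (((((ascPochhammer ℝ (∑ i, n i)).eval a * (ascPochhammer ℝ (∑ i, n i)).eval b) /
    ∏ i, (ascPochhammer ℝ (n i)).eval (c i)) : ℝ) : ℂ) * ∏ i, z i ^ n i / ((n i)! : ℂ)

theorem norm_lauricellaFCTerm (a b : ℝ) (c : ι → ℝ) (z : ι → ℂ)
    (n : ι → ℕ) :
    ‖lauricellaFCTerm a b c z n‖ =
      |(ascPochhammer ℝ (∑ i, n i)).eval a| / (∑ i, n i)! *
        (|(ascPochhammer ℝ (∑ i, n i)).eval b| / (∑ i, n i)!) *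
        (∏ i, ((n i)! / |(ascPochhammer ℝ (n i)).eval (c i)|)) *
        ((Nat.multinomial univ n : ℝ) ^ 2 * ∏ i, ‖z i‖ ^ n i) := by
  have hfact : (∏ i, ((n i)! : ℝ)) ≠ 0 := prod_ne_zero_iff.2 fun i _ => by positivity
  have hmult : (Nat.multinomial univ n : ℝ) = (∑ i, n i)! / ∏ i, ((n i)! : ℝ) := by
    rw [eq_div_iff hfact, mul_comm]
    exact_mod_cast Nat.multinomial_spec univ n
  simp only [lauricellaFCTerm, norm_mul, Complex.norm_real, Real.norm_eq_abs, norm_prod, norm_div,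
    norm_pow, Complex.norm_natCast]
  rw [hmult, prod_div_distrib, prod_div_distrib]
  field_simp

end

theorem lauricellaFC_summable_general (r : ℕ) (a b : ℝ) (c : Fin r → ℝ)
    (hc : ∀ i, ∀ k : ℕ, c i ≠ -(k : ℝ))
    (z : Fin r → ℂ) (hz : ∑ i, Real.sqrt ‖z i‖ < 1) :
    Summable fun n : Fin r → ℕ =>
      ‖(((((ascPochhammer ℝ (∑ i, n i)).eval a * (ascPochhammer ℝ (∑ i, n i)).eval b) /
            ∏ i, (ascPochhammer ℝ (n i)).eval (c i)) : ℝ) : ℂ)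
        * ∏ i, z i ^ n i / ((n i).factorial : ℂ)‖ := by
  change Summable fun n => ‖lauricellaFCTerm a b c z n‖
  obtain ⟨ρ, hρz, hρ⟩ : ∃ ρ : ℝ, ρ ^ 3 * ∑ i, √‖z i‖ < 1 ∧ 1 < ρ := by
    have hcont : Continuous fun ρ : ℝ => ρ ^ 3 * ∑ i, √‖z i‖ := by fun_prop
    have hnear : ∀ᶠ ρ in 𝓝 1, ρ ^ 3 * ∑ i, √‖z i‖ < 1 :=
      (hcont.tendsto' 1 _ (by simp)).eventually (gt_mem_nhds hz)
    exact ((hnear.filter_mono (nhdsWithin_le_nhds (s := Set.Ioi 1))).and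
      self_mem_nhdsWithin).exists
  have hρ2 : 1 < ρ ^ 2 := one_lt_pow₀ hρ two_ne_zero
  obtain ⟨Ca, hCa0, hCa⟩ := exists_abs_ascPochhammer_eval_div_factorial_le a hρ2
  obtain ⟨Cb, hCb0, hCb⟩ := exists_abs_ascPochhammer_eval_div_factorial_le b hρ2
  choose Cc hCc0 hCc using fun i => exists_factorial_div_abs_ascPochhammer_eval_le (hc i) hρ2
  set w : Fin r → ℝ := fun i => ρ ^ 3 * √‖z i‖
  have hw : ∀ i, 0 ≤ w i := fun i => mul_nonneg (by positivity) (Real.sqrt_nonneg _)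
  have hw1 : ∑ i, w i < 1 := by rwa [← mul_sum]
  have hw_sq : ∀ i, w i ^ 2 = (ρ ^ 2) ^ 3 * ‖z i‖ := fun i => by
    rw [mul_pow, Real.sq_sqrt (norm_nonneg _)]; ring
  refine .of_nonneg_of_le (fun n => norm_nonneg _) (fun n => ?_)
    ((summable_multinomial_mul_prod_pow hw hw1).mul_left (Ca * Cb * ∏ i, Cc i))
  have hmw := (multinomial_mul_prod_pow_le hw n).trans
    (pow_le_one₀ (sum_nonneg fun i _ => hw i) hw1.le)
  rw [norm_lauricellaFCTerm]
  set N := ∑ i, n i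
  set m : ℝ := (Nat.multinomial univ n : ℝ)
  calc _ ≤ Ca * (ρ ^ 2) ^ N * (Cb * (ρ ^ 2) ^ N) * (∏ i, (Cc i * (ρ ^ 2) ^ n i)) *
        (m ^ 2 * ∏ i, ‖z i‖ ^ n i) := by
        gcongr with i
        · exact hCa N
        · exact hCb N
        · exact hCc i (n i)
    _ = Ca * Cb * (∏ i, Cc i) * (m * ∏ i, w i ^ n i) ^ 2 := by
        simp_rw [mul_pow, ← prod_pow, ← pow_mul, mul_comm (n _) 2, pow_mul, hw_sq, mul_pow,
          prod_mul_distrib, prod_pow_eq_pow_sum]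
        ring
    _ ≤ Ca * Cb * (∏ i, Cc i) * (m * ∏ i, w i ^ n i) := by
        have hsq_le := pow_le_of_le_one (by positivity) hmw two_ne_zero
        have hCc_prod := prod_nonneg fun i (_ : i ∈ univ) => hCc0 i
        gcongr

/-- The Lauricella `F_C` series
`∑_{n ∈ ℕ₀^r} (a)_{|n|}(b)_{|n|} / ∏ᵢ (cᵢ)_{nᵢ} · ∏ᵢ zᵢ^{nᵢ}/nᵢ!`
converges absolutely whenever `|z₁|^{1/2} + ⋯ + |z_r|^{1/2} < 1`, for any real
parameters `a, b` and real `cᵢ` that are not nonpositive integers. -/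
theorem lauricellaFC_summable (r : ℕ) (hr : 1 ≤ r) (a b : ℝ) (c : Fin r → ℝ)
    (hc : ∀ i, ∀ k : ℕ, c i ≠ -(k : ℝ))
    (z : Fin r → ℂ) (hz : ∑ i, Real.sqrt ‖z i‖ < 1) :
    Summable fun n : Fin r → ℕ =>
      ‖(((((ascPochhammer ℝ (∑ i, n i)).eval a * (ascPochhammer ℝ (∑ i, n i)).eval b) /
            ∏ i, (ascPochhammer ℝ (n i)).eval (c i)) : ℝ) : ℂ)
        * ∏ i, z i ^ n i / ((n i).factorial : ℂ)‖ :=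
  lauricellaFC_summable_general r a b c hc z hz
end

section
/- The matrices A = [[1, 2], [0, 1]] and B = [[1, 0], [−2, 1]] in SL(2, ℤ) generate a free group of rank 2: no nonempty reduced word in A, A⁻¹, B, B⁻¹ equals the identity matrix. -/
/-!
`A` and `B` are the transvections `E₀₁(2)` and `E₁₀(-2)`, so `A ^ n = E₀₁(2n)` and
`B ^ n = E₁₀(-2n)`. For `|c| ≥ 2`, `E₀₁(c)` sends `(x, y)` with `|x| < |y|` to
`(x + c y, y)`, and `|x + c y| ≥ 2|y| - |x| > |y|`. Hence nonzero powers of `A` map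
`{|x| < |y|}` into `{|x| > |y|}`, nonzero powers of `B` do the reverse, and the ping-pong
lemma for the free product `ℤ ∗ ℤ` shows that no nontrivial word acts trivially on `ℤ²`.
-/

open Matrix

/-- The matrix `[[1,2],[0,1]]` as an element of `SL(2,ℤ)`. -/
noncomputable def sanovA : Matrix.SpecialLinearGroup (Fin 2) ℤ :=
  ⟨!![1, 2; 0, 1], by norm_num [Matrix.det_fin_two_of]⟩

/-- The matrix `[[1,0],[−2,1]]` as an element of `SL(2,ℤ)`. -/
noncomputable def sanovB : Matrix.SpecialLinearGroup (Fin 2) ℤ :=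
  ⟨!![1, 0; -2, 1], by norm_num [Matrix.det_fin_two_of]⟩

open scoped Function Pointwise

theorem FreeGroup.injective_lift_of_ping_pong_zpow {ι G α : Type*} [Nontrivial ι] [Group G]
    [MulAction G α] (a : ι → G) (X : ι → Set α) (hne : ∀ i, (X i).Nonempty)
    (hdisj : Pairwise (Disjoint on X))
    (hpp : Pairwise fun i j => ∀ n : ℤ, n ≠ 0 → a i ^ n • X j ⊆ X i) :
    Function.Injective (FreeGroup.lift a) := by
  -- `FreeGroup ι` is the free product of copies of `FreeGroup Unit ≃ ℤ`.
  have hlift : FreeGroup.lift a =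
      (Monoid.CoprodI.lift fun i => FreeGroup.lift fun _ => a i).comp
        (freeGroupEquivCoprodI (ι := ι)).toMonoidHom := by
    ext i; simp
  rw [hlift, MonoidHom.coe_comp]
  refine .comp ?_ freeGroupEquivCoprodI.injective
  have hcard : 3 ≤ Cardinal.mk (FreeGroup Unit) :=
    (Cardinal.natCast_lt_aleph0 (n := 3)).le.trans (Cardinal.aleph0_le_mk _)
  refine Monoid.CoprodI.lift_injective_of_ping_pong _ (.inr ⟨Classical.arbitrary ι, hcard⟩)
    X hne hdisj ?_
  intro i j hij w hw
  obtain ⟨n, rfl⟩ : ∃ n : ℤ, FreeGroup.of () ^ n = w :=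
    ⟨FreeGroup.freeGroupUnitEquivInt w, FreeGroup.freeGroupUnitEquivInt.symm_apply_apply w⟩
  rw [map_zpow, FreeGroup.lift_apply_of]
  exact hpp hij n (by rintro rfl; exact hw (zpow_zero _))

namespace Matrix.SpecialLinearGroup

variable {ι F : Type*} [DecidableEq ι] [Fintype ι] [CommRing F]

theorem transvection_zpow {i j : ι} (hij : i ≠ j) (b : F) (n : ℤ) :
    transvection hij b ^ n = transvection hij (n * b) := by
  let hom : Multiplicative F →* SpecialLinearGroup ι F :=
    { toFun := fun c => transvection hij c.toAdd
      map_one' := transvection_coeff_zero hij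
      map_mul' := fun c d => transvection_add hij c.toAdd d.toAdd }
  simpa [hom, zsmul_eq_mul] using (map_zpow hom (.ofAdd b) n).symm

theorem transvection_smul {i j : ι} (hij : i ≠ j) (b : F) (v : ι → F) :
    transvection hij b • v = v + Pi.single i (b * v j) := by
  ext k
  simp [SpecialLinearGroup.smul_def, transvection_coe, add_mulVec, single_mulVec]
  rfl

end Matrix.SpecialLinearGroup

section CoordDominant

variable {ι F : Type*}

def coordDominant [Lattice F] [AddGroup F] (i : ι) : Set (ι → F) :=
  {v | ∀ k ≠ i, |v k| < |v i|}

theorem pairwise_disjoint_coordDominant [LinearOrder F] [AddGroup F] :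
    Pairwise (Disjoint on (coordDominant : ι → Set (ι → F))) := fun i j hij =>
  Set.disjoint_left.mpr fun _ hi hj => (hi j hij.symm).asymm (hj i hij)

variable [CommRing F] [LinearOrder F] [IsStrictOrderedRing F]

theorem coordDominant_nonempty [DecidableEq ι] (i : ι) :
    (coordDominant (F := F) i).Nonempty :=
  ⟨Pi.single i 1, fun k hk => by simp [hk]⟩

theorem abs_lt_abs_add_mul {x y c : F} (hc : 2 ≤ |c|) (h : |x| < |y|) :
    |y| < |x + c * y| :=
  calc |y| < 2 * |y| - |x| := by linarith
    _ ≤ |c| * |y| - |x| := by gcongr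
    _ = |c * y| - |x| := by rw [abs_mul]
    _ ≤ |x + c * y| := by rw [add_comm]; exact abs_sub_abs_le_abs_add _ _

theorem transvection_smul_mem_coordDominant [Fintype ι] [DecidableEq ι] {i j : ι}
    (hij : i ≠ j) {c : F} (hc : 2 ≤ |c|) {v : ι → F} (hv : v ∈ coordDominant j) :
    SpecialLinearGroup.transvection hij c • v ∈ coordDominant i := by
  have hi : |v j| < |v i + c * v j| := abs_lt_abs_add_mul hc (hv i hij)
  intro k hk
  rw [SpecialLinearGroup.transvection_smul, Pi.add_apply, Pi.add_apply, Pi.single_eq_same,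
    Pi.single_eq_of_ne hk, add_zero]
  rcases eq_or_ne k j with rfl | hkj
  · exact hi
  · exact (hv k hkj).trans hi

theorem injective_lift_transvections {b c : F} (hb : 2 ≤ |b|) (hc : 2 ≤ |c|) :
    Function.Injective (FreeGroup.lift
      ![SpecialLinearGroup.transvection (Fin.zero_ne_one' (n := 1)) b,
        SpecialLinearGroup.transvection (Fin.zero_ne_one' (n := 1)).symm c]) := by
  refine FreeGroup.injective_lift_of_ping_pong_zpow _ (coordDominant (F := F))
    coordDominant_nonempty pairwise_disjoint_coordDominant ?_
  have two_le_abs_intCast_mul {n : ℤ} (hn : n ≠ 0) {b : F} (hb : 2 ≤ |b|) :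
      2 ≤ |(n : F) * b| := by
    have one_le : (1 : F) ≤ |(n : F)| := by exact_mod_cast Int.one_le_abs hn
    rw [abs_mul]
    exact hb.trans (le_mul_of_one_le_left (abs_nonneg b) one_le)
  simp only [Pairwise, Fin.forall_fin_two]
  refine ⟨⟨absurd rfl, fun _ n hn => ?_⟩, fun _ n hn => ?_, absurd rfl⟩ <;>
    simp only [cons_val_zero, cons_val_one, SpecialLinearGroup.transvection_zpow,
      Set.smul_set_subset_iff]
  · exact fun v => transvection_smul_mem_coordDominant _ (two_le_abs_intCast_mul hn hb)
  · exact fun v => transvection_smul_mem_coordDominant _ (two_le_abs_intCast_mul hn hc)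

end CoordDominant

theorem sanovA_eq_transvection : sanovA = SpecialLinearGroup.transvection Fin.zero_ne_one' 2 := by
  ext i j; fin_cases i <;> fin_cases j <;> rfl

theorem sanovB_eq_transvection :
    sanovB = SpecialLinearGroup.transvection Fin.zero_ne_one'.symm (-2) := by
  ext i j; fin_cases i <;> fin_cases j <;> rfl

/-- Sanov's theorem: the matrices `A = [[1,2],[0,1]]` and `B = [[1,0],[−2,1]]` generate a
free group of rank 2 in `SL(2,ℤ)`: the homomorphism from the free group on two
generators sending them to `A` and `B` is injective (equivalently, no nonempty reduced
word in `A, A⁻¹, B, B⁻¹` equals the identity). -/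
theorem sanov_free :
    Function.Injective ⇑(FreeGroup.lift ![sanovA, sanovB]) := by
  rw [sanovA_eq_transvection, sanovB_eq_transvection]
  exact injective_lift_transvections (by norm_num) (by norm_num)
end
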